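/- Under the hypotheses that c·r ≥ 0 for every ray r in R⁰ and p* minimizes c over P⁰ ⊇ {p*}, the minimum of c·x over the disjunctive hull P_D = cl conv(∪_t Pᵗ) equals c·p*, whenever Pᵗ ⊆ conv(P⁰) + cone(R⁰) and p* ∈ Pᵗ* for some t*. -/

import Mathlib

open Pointwise

noncomputable section

/-- Dot product on `ℝⁿ`. -/
def dot {n : ℕ} (a x : Fin n → ℝ) : ℝ := ∑ i, a i * x i

/-- Conical (nonnegative) hull of a set of rays. -/
def coneHull {n : ℕ} (R : Set (Fin n → ℝ)) : Set (Fin n → ℝ) :=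
  {y | ∃ (s : Finset (Fin n → ℝ)) (c : (Fin n → ℝ) → ℝ),
      ↑s ⊆ R ∧ (∀ r ∈ s, 0 ≤ c r) ∧ y = ∑ r ∈ s, c r • r}

/-- The point-ray hull `conv(P) + cone(R)` (Minkowski sum). -/
def pointRayHull {n : ℕ} (P R : Set (Fin n → ℝ)) : Set (Fin n → ℝ) :=
  convexHull ℝ P + coneHull R

/-- A polyhedron: intersection of finitely many halfspaces. -/
def IsPolyhedron {n : ℕ} (S : Set (Fin n → ℝ)) : Prop :=
  ∃ (m : ℕ) (A : Fin m → (Fin n → ℝ)) (b : Fin m → ℝ),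
    S = {x | ∀ i, b i ≤ dot (A i) x}

/-- Recession cone of a set. -/
def recessionCone {n : ℕ} (S : Set (Fin n → ℝ)) : Set (Fin n → ℝ) :=
  {r | ∀ x ∈ S, ∀ t : ℝ, 0 ≤ t → x + t • r ∈ S}

/-- A set is pointed if its recession cone contains no line. -/
def IsPointed {n : ℕ} (S : Set (Fin n → ℝ)) : Prop :=
  ∀ r ∈ recessionCone S, -r ∈ recessionCone S → r = 0

/-- `x` generates an extreme ray of the cone `C`: it is a nonzero element of `C` that
cannot be written as a sum of two elements of `C` not both parallel to it. -/
def IsExtremeRay {V : Type*} [AddCommGroup V] [Module ℝ V] (C : Set V) (x : V) : Prop :=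
  x ∈ C ∧ x ≠ 0 ∧ ∀ y ∈ C, ∀ z ∈ C, x = y + z →
    (∃ t : ℝ, 0 ≤ t ∧ y = t • x) ∧ (∃ t : ℝ, 0 ≤ t ∧ z = t • x)

/-- Affine dimension of a subset of `ℝⁿ`. -/
def affDim {n : ℕ} (S : Set (Fin n → ℝ)) : ℕ :=
  Module.finrank ℝ (affineSpan ℝ S).direction

/-!
The halfspace `{x | c·p* ≤ c·x}` is closed and convex. It contains `P⁰` by the choice of `p*`,
and adding rays of `R⁰` never leaves it since `c·r ≥ 0`; so it contains
`conv(P⁰) + cone(R⁰) ⊇ Pᵗ` for every `t`, hence also `P_D`.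
-/

section HalfSpace

variable {n : ℕ}

lemma dot_eq_dotProduct (a x : Fin n → ℝ) : dot a x = a ⬝ᵥ x := rfl

lemma isLinearMap_dot (c : Fin n → ℝ) : IsLinearMap ℝ (dot c) :=
  ⟨dotProduct_add c, fun t x => dotProduct_smul t c x⟩

lemma continuous_dot (c : Fin n → ℝ) : Continuous (dot c) :=
  continuous_const.dotProduct continuous_id

lemma dot_nonneg_of_mem_coneHull {c : Fin n → ℝ} {R : Set (Fin n → ℝ)} (hR : ∀ r ∈ R, 0 ≤ dot c r)
    {y : Fin n → ℝ} (hy : y ∈ coneHull R) : 0 ≤ dot c y := by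
  obtain ⟨s, w, hsR, hw, rfl⟩ := hy
  rw [dot_eq_dotProduct, dotProduct_sum]
  refine Finset.sum_nonneg fun r hr => ?_
  rw [dotProduct_smul, smul_eq_mul]
  exact mul_nonneg (hw r hr) (hR r (hsR hr))

lemma pointRayHull_subset_halfSpace {c : Fin n → ℝ} {P R : Set (Fin n → ℝ)} {a : ℝ}
    (hP : ∀ p ∈ P, a ≤ dot c p) (hR : ∀ r ∈ R, 0 ≤ dot c r) :
    pointRayHull P R ⊆ {x | a ≤ dot c x} := by
  rintro _ ⟨y, hy, z, hz, rfl⟩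
  have hy' : a ≤ dot c y := convexHull_min hP (convex_halfSpace_ge (isLinearMap_dot c) a) hy
  have hz' : 0 ≤ dot c z := dot_nonneg_of_mem_coneHull hR hz
  show a ≤ dot c (y + z)
  rw [(isLinearMap_dot c).map_add]
  linarith

lemma closure_convexHull_subset_halfSpace {c : Fin n → ℝ} {S : Set (Fin n → ℝ)} {a : ℝ}
    (hS : S ⊆ {x | a ≤ dot c x}) : closure (convexHull ℝ S) ⊆ {x | a ≤ dot c x} :=
  closure_minimal (convexHull_min hS (convex_halfSpace_ge (isLinearMap_dot c) a))
    (isClosed_le continuous_const (continuous_dot c))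

end HalfSpace

theorem stmt_11_general {n : ℕ} {T : Type*} (c : Fin n → ℝ)
    (Pt : T → Set (Fin n → ℝ))
    (p : T → (Fin n → ℝ)) (r : T → Fin n → (Fin n → ℝ))
    (hmem : ∀ t, p t ∈ Pt t)
    (hray : ∀ t j, 0 ≤ dot c (r t j))
    (tstar : T) (hstar : ∀ t, dot c (p tstar) ≤ dot c (p t))
    (hsand : ∀ t, Pt t ⊆ pointRayHull (Set.range p) (⋃ t', Set.range (r t'))) :
    p tstar ∈ closure (convexHull ℝ (⋃ t, Pt t)) ∧
      ∀ x ∈ closure (convexHull ℝ (⋃ t, Pt t)), dot c (p tstar) ≤ dot c x := by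
  refine ⟨subset_closure (subset_convexHull ℝ _ (Set.mem_iUnion_of_mem tstar (hmem tstar))), ?_⟩
  refine closure_convexHull_subset_halfSpace (Set.iUnion_subset fun t => (hsand t).trans ?_)
  refine pointRayHull_subset_halfSpace (Set.forall_mem_range.2 hstar) ?_
  simp only [Set.mem_iUnion, Set.mem_range]
  rintro _ ⟨t, j, rfl⟩
  exact hray t j

/-- If `c·r ≥ 0` for every ray of `R⁰`, `p* = p^{t*}` minimizes `c` over
`P⁰ = {pᵗ}`, each term `Pᵗ` satisfies `Pᵗ ⊆ conv(P⁰) + cone(R⁰)` and `p* ∈ P^{t*}`, then the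
minimum of `c·x` over the disjunctive hull `P_D = cl conv(∪ₜ Pᵗ)` equals `c·p*` (attained at
`p*`). -/
theorem stmt_11 {n : ℕ} {T : Type*} [Fintype T] (c : Fin n → ℝ)
    (Pt : T → Set (Fin n → ℝ)) (hpoly : ∀ t, IsPolyhedron (Pt t))
    (p : T → (Fin n → ℝ)) (r : T → Fin n → (Fin n → ℝ))
    (hmem : ∀ t, p t ∈ Pt t)
    (hopt : ∀ t, ∀ x ∈ Pt t, dot c (p t) ≤ dot c x)
    (hray : ∀ t j, 0 ≤ dot c (r t j))
    (tstar : T) (hstar : ∀ t, dot c (p tstar) ≤ dot c (p t))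
    (hsand : ∀ t, Pt t ⊆ pointRayHull (Set.range p) (⋃ t', Set.range (r t'))) :
    p tstar ∈ closure (convexHull ℝ (⋃ t, Pt t)) ∧
      ∀ x ∈ closure (convexHull ℝ (⋃ t, Pt t)), dot c (p tstar) ≤ dot c x :=
  stmt_11_general c Pt p r hmem hray tstar hstar hsand
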